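/- For -ν < u_3 < u_2 < u_1, the integral I(u_1,u_2,u_3) = ∫_{u_3}^{u_2} (η + ν)/√((η + ν)(u_1 - η)(u_2 - η)(η - u_3)) dη equals 2(u_3 + ν)Π(ρ, s)/√((u_1 - u_3)(u_2 + ν)), where ρ = (u_2 - u_3)/(u_2 + ν), s = (u_2 - u_3)(u_1 + ν)/((u_1 - u_3)(u_2 + ν)), and Π is the complete elliptic integral of the third kind. -/

import Mathlib

/-!
The substitution `η + ν = (u₂ + ν)(u₃ + ν) / D(θ)` with `D(θ) = (u₂ + ν) - (u₂ - u₃) sin²θ`,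
a Möbius transformation in `sin²θ`, maps `[0, π/2]` increasingly onto `[u₃, u₂]`. It turns
`η + ν`, `u₂ - η`, `η - u₃` and `u₁ - η` into `1`, `cos²θ`, `sin²θ` and `1 - s sin²θ`, each up to
a constant and a factor `1 / D(θ)`, so the only square root left in the pulled-back integrand is
`√(1 - s sin²θ)`, while `D(θ) = (u₂ + ν)(1 - ρ sin²θ)` produces the characteristic `ρ`.
The integrand is singular at both ends, so the change of variables is done with the formula for
injective maps, which needs no integrability.
-/

open Real Filter Topology Set

/-- Complete elliptic integral of the third kind (parameter = modulus squared). -/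
noncomputable def Pel (ρ s : ℝ) : ℝ :=
  ∫ θ in (0:ℝ)..(π / 2),
    1 / ((1 - ρ * Real.sin θ ^ 2) * Real.sqrt (1 - s * Real.sin θ ^ 2))

open MeasureTheory

theorem integral_subst_of_deriv_pos {E : Type*} [NormedAddCommGroup E] [NormedSpace ℝ E]
    {f f' : ℝ → ℝ} {g h : ℝ → E} {a b : ℝ} (hab : a ≤ b) (hfc : ContinuousOn f (Icc a b))
    (hf : ∀ x ∈ Ioo a b, HasDerivAt f (f' x) x) (hf' : ∀ x ∈ Ioo a b, 0 < f' x)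
    (hfg : ∀ x ∈ Ioo a b, f' x • g (f x) = h x) :
    ∫ y in f a..f b, g y = ∫ x in a..b, h x := by
  have hmono : StrictMonoOn f (Icc a b) := by
    refine strictMonoOn_of_deriv_pos (convex_Icc a b) hfc fun x hx => ?_
    rw [interior_Icc] at hx
    rw [(hf x hx).deriv]
    exact hf' x hx
  have hfab : f a ≤ f b := hmono.monotoneOn (left_mem_Icc.2 hab) (right_mem_Icc.2 hab) hab
  rw [intervalIntegral.integral_of_le hfab, intervalIntegral.integral_of_le hab,
    integral_Ioc_eq_integral_Ioo, integral_Ioc_eq_integral_Ioo,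
    ← hfc.image_Ioo_of_strictMonoOn hab hmono,
    integral_image_eq_integral_abs_deriv_smul measurableSet_Ioo
      (fun x hx => (hf x hx).hasDerivWithinAt) (hmono.injOn.mono Ioo_subset_Icc_self)]
  refine setIntegral_congr_fun measurableSet_Ioo fun x hx => ?_
  rw [abs_of_pos (hf' x hx), hfg x hx]

theorem one_sub_mul_sin_sq_pos {k : ℝ} (hk : k < 1) (θ : ℝ) : 0 < 1 - k * sin θ ^ 2 := by
  have h0 := sq_nonneg (sin θ)
  have h1 := sin_sq_le_one θ
  rcases le_or_gt k 0 with hk0 | hk0 <;> nlinarith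

noncomputable def ellipticSubst (ν u2 u3 θ : ℝ) : ℝ :=
  (u2 + ν) * (u3 + ν) / (u2 + ν - (u2 - u3) * sin θ ^ 2) - ν

noncomputable def ellipticSubstDeriv (ν u2 u3 θ : ℝ) : ℝ :=
  2 * (u2 + ν) * (u2 - u3) * (u3 + ν) * (sin θ * cos θ) / (u2 + ν - (u2 - u3) * sin θ ^ 2) ^ 2

section ellipticSubst

variable {ν u1 u2 u3 : ℝ}

theorem ellipticSubst_denom_pos (h3 : -ν < u3) (h32 : u3 < u2) (θ : ℝ) :
    0 < u2 + ν - (u2 - u3) * sin θ ^ 2 := by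
  nlinarith [sin_sq_le_one θ, sq_nonneg (sin θ)]

theorem hasDerivAt_ellipticSubst (h3 : -ν < u3) (h32 : u3 < u2) (θ : ℝ) :
    HasDerivAt (ellipticSubst ν u2 u3) (ellipticSubstDeriv ν u2 u3 θ) θ := by
  have hsin : HasDerivAt (fun θ => sin θ ^ 2) (2 * sin θ * cos θ) θ := by
    simpa [mul_comm, mul_assoc] using (hasDerivAt_sin θ).fun_pow 2
  have hden := (hsin.const_mul (u2 - u3)).const_sub (u2 + ν)
  refine HasDerivAt.congr_deriv (f := ellipticSubst ν u2 u3)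
    (((hden.inv (ellipticSubst_denom_pos h3 h32 θ).ne').const_mul
      ((u2 + ν) * (u3 + ν))).sub_const ν) ?_
  unfold ellipticSubstDeriv
  field_simp

theorem ellipticSubst_zero (h3 : -ν < u3) (h32 : u3 < u2) : ellipticSubst ν u2 u3 0 = u3 := by
  have : u2 + ν ≠ 0 := by linarith
  simp [ellipticSubst, this]

theorem ellipticSubst_pi_div_two (h3 : -ν < u3) : ellipticSubst ν u2 u3 (π / 2) = u2 := by
  have : u3 + ν ≠ 0 := by linarith
  rw [ellipticSubst, sin_pi_div_two, show u2 + ν - (u2 - u3) * 1 ^ 2 = u3 + ν by ring,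
    mul_div_cancel_right₀ _ this, add_sub_cancel_right]

theorem ellipticSubstDeriv_pos (h3 : -ν < u3) (h32 : u3 < u2) {θ : ℝ}
    (hθ : θ ∈ Ioo 0 (π / 2)) : 0 < ellipticSubstDeriv ν u2 u3 θ := by
  have hsin : 0 < sin θ := sin_pos_of_pos_of_lt_pi hθ.1 (by linarith [hθ.2, pi_pos])
  have hcos : 0 < cos θ := cos_pos_of_mem_Ioo ⟨by linarith [hθ.1, pi_pos], hθ.2⟩
  have : 0 < u2 + ν := by linarith
  have : 0 < u2 - u3 := by linarith
  have : 0 < u3 + ν := by linarith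
  exact div_pos (by positivity) (pow_pos (ellipticSubst_denom_pos h3 h32 θ) 2)

theorem ellipticSubstDeriv_mul_integrand_ellipticSubst (h3 : -ν < u3) (h32 : u3 < u2)
    (h21 : u2 < u1) {θ : ℝ} (hθ : θ ∈ Ioo 0 (π / 2)) :
    ellipticSubstDeriv ν u2 u3 θ *
        ((ellipticSubst ν u2 u3 θ + ν) / √((ellipticSubst ν u2 u3 θ + ν) *
          (u1 - ellipticSubst ν u2 u3 θ) * (u2 - ellipticSubst ν u2 u3 θ) *
          (ellipticSubst ν u2 u3 θ - u3)))
      = 2 * (u3 + ν) / √((u1 - u3) * (u2 + ν)) *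
        (1 / ((1 - (u2 - u3) / (u2 + ν) * sin θ ^ 2) *
          √(1 - (u2 - u3) * (u1 + ν) / ((u1 - u3) * (u2 + ν)) * sin θ ^ 2))) := by
  have hsin : 0 < sin θ := sin_pos_of_pos_of_lt_pi hθ.1 (by linarith [hθ.2, pi_pos])
  have hcos : 0 < cos θ := cos_pos_of_mem_Ioo ⟨by linarith [hθ.1, pi_pos], hθ.2⟩
  have hA : 0 < u2 + ν := by linarith
  have hB : 0 < u2 - u3 := by linarith
  have hC : 0 < u3 + ν := by linarith
  have hE : 0 < u1 - u3 := by linarith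
  have hD := ellipticSubst_denom_pos h3 h32 θ
  have hs : (u2 - u3) * (u1 + ν) / ((u1 - u3) * (u2 + ν)) < 1 := by
    rw [div_lt_one (by positivity)]
    nlinarith
  have hk := one_sub_mul_sin_sq_pos hs θ
  have hprod : (ellipticSubst ν u2 u3 θ + ν) * (u1 - ellipticSubst ν u2 u3 θ) *
      (u2 - ellipticSubst ν u2 u3 θ) * (ellipticSubst ν u2 u3 θ - u3)
      = ((u2 + ν) * (u2 - u3) * (u3 + ν) * (sin θ * cos θ) /
          (u2 + ν - (u2 - u3) * sin θ ^ 2) ^ 2) ^ 2 *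
        ((u1 - u3) * (u2 + ν) *
          (1 - (u2 - u3) * (u1 + ν) / ((u1 - u3) * (u2 + ν)) * sin θ ^ 2)) := by
    have hcos2 := cos_sq' θ
    rw [ellipticSubst]
    field_simp
    rw [hcos2]
    ring
  rw [hprod, sqrt_mul' _ (by positivity), sqrt_sq (by positivity), sqrt_mul (by positivity),
    ellipticSubst, sub_add_cancel, ellipticSubstDeriv]
  field_simp

end ellipticSubst

/-- For `-ν < u_3 < u_2 < u_1`,
`∫_{u_3}^{u_2} (η+ν)/√((η+ν)(u_1-η)(u_2-η)(η-u_3)) dη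
  = 2(u_3+ν) Π(ρ,s)/√((u_1-u_3)(u_2+ν))`,
with `ρ = (u_2-u_3)/(u_2+ν)` and `s = (u_2-u_3)(u_1+ν)/((u_1-u_3)(u_2+ν))`. -/
theorem CHI_eq_Pi (ν u1 u2 u3 : ℝ) (h3 : -ν < u3) (h32 : u3 < u2) (h21 : u2 < u1) :
    (∫ η in u3..u2, (η + ν) / Real.sqrt ((η + ν) * (u1 - η) * (u2 - η) * (η - u3)))
      = 2 * (u3 + ν) *
          Pel ((u2 - u3) / (u2 + ν)) ((u2 - u3) * (u1 + ν) / ((u1 - u3) * (u2 + ν)))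
        / Real.sqrt ((u1 - u3) * (u2 + ν)) := by
  have hsubst := integral_subst_of_deriv_pos
    (g := fun η => (η + ν) / √((η + ν) * (u1 - η) * (u2 - η) * (η - u3))) pi_div_two_pos.le
    (fun θ _ => (hasDerivAt_ellipticSubst h3 h32 θ).continuousAt.continuousWithinAt)
    (fun θ _ => hasDerivAt_ellipticSubst h3 h32 θ) (fun θ => ellipticSubstDeriv_pos h3 h32)
    (fun θ hθ => ellipticSubstDeriv_mul_integrand_ellipticSubst h3 h32 h21 hθ)
  rw [ellipticSubst_zero h3 h32, ellipticSubst_pi_div_two h3] at hsubst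
  rw [hsubst, intervalIntegral.integral_const_mul, Pel, div_mul_eq_mul_div]
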